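/- arXiv:1311.3766 — 4 statements merged into one kernel-verified Lean document; each statement's English description precedes it below -/
import Mathlib

section
/- Let B be a symmetric positive definite bounded operator on H, A a symmetric positive semidefinite bounded operator, and let d be a symmetric bilinear form with d(u,v) = b(u,v) where b is induced by A. If θ ≥ 1/2 and elements y⁰, y¹ satisfy ⟨B (y¹ - y⁰)/τ, yθ⟩ + ⟨A yθ, yθ⟩ ≤ c for yθ = θ•y¹ + (1-θ)•y⁰ and τ > 0, then (1/(2τ))(⟨B y¹, y¹⟩ - ⟨B y⁰, y⁰⟩) ≤ c. -/
open RealInnerProductSpace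

theorem weighted_scheme_energy_step
    {H : Type*} [NormedAddCommGroup H] [InnerProductSpace ℝ H]
    (B A : H →L[ℝ] H)
    (hBsym : ∀ x y : H, ⟪B x, y⟫ = ⟪x, B y⟫)
    (hBpos : ∀ x : H, x ≠ 0 → 0 < ⟪B x, x⟫)
    (hAsym : ∀ x y : H, ⟪A x, y⟫ = ⟪x, A y⟫)
    (hApos : ∀ x : H, 0 ≤ ⟪A x, x⟫)
    (τ θ c : ℝ) (hτ : 0 < τ) (hθ : 1 / 2 ≤ θ)
    (y0 y1 : H)
    (yθ : H) (hyθ : yθ = θ • y1 + (1 - θ) • y0)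
    (hineq : ⟪B ((τ⁻¹ : ℝ) • (y1 - y0)), yθ⟫ + ⟪A yθ, yθ⟫ ≤ c) :
    (1 / (2 * τ)) * (⟪B y1, y1⟫ - ⟪B y0, y0⟫) ≤ c := by
  have hA : 0 ≤ ⟪A yθ, yθ⟫ := hApos _
  have hBw : 0 ≤ ⟪B (y1 - y0), y1 - y0⟫ := by
    rcases eq_or_ne (y1 - y0) 0 with h | h
    · simp [h]
    · exact (hBpos _ h).le
  have hs : ⟪B y1, y0⟫ = ⟪B y0, y1⟫ := by rw [hBsym, real_inner_comm]
  simp only [hyθ, map_smul, map_sub, inner_smul_left, inner_sub_left,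
    inner_sub_right, inner_add_right, inner_smul_right, RCLike.conj_to_real,
    ContinuousLinearMap.sub_apply] at hineq hBw hA
  have hτ' : 0 < τ⁻¹ := inv_pos.mpr hτ
  rw [hs] at hineq hBw
  have hrw : (1 / (2 * τ)) = τ⁻¹ * (1 / 2) := by field_simp
  rw [hrw]
  nlinarith [mul_nonneg (mul_nonneg hτ'.le (by linarith : (0:ℝ) ≤ θ - 1/2)) hBw]
end

section
/- Consider the abstract evolution problem B U' + A U = F on a finite-dimensional real inner product space, where B is symmetric positive definite and A is symmetric positive definite and invertible. Then any differentiable solution U satisfies ⟨B U(t), U(t)⟩ ≤ ⟨B U(0), U(0)⟩ + (1/2)∫₀ᵗ ⟨A⁻¹ F(s), F(s)⟩ ds for all t ≥ 0. -/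
/-!
The energy `⟪B U, U⟫` has derivative `2 ⟪F - A U, U⟫`, and completing the square in the
quadratic form of `A` bounds this by `½ ⟪A⁻¹ F, F⟫`. Integrating this differential inequality
needs no integrability of `U'`, since only an upper bound on the derivative enters.
-/

open RealInnerProductSpace

namespace ContinuousLinearMap

variable {H : Type*} [NormedAddCommGroup H] [InnerProductSpace ℝ H]

theorem IsSymmetric.hasDerivAt_inner_map_self {T : H →L[ℝ] H} (hT : T.IsSymmetric)
    {u : ℝ → H} {u' : H} {t : ℝ} (hu : HasDerivAt u u' t) :
    HasDerivAt (fun s => ⟪T (u s), u s⟫) (2 * ⟪T u', u t⟫) t := by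
  have hTu : HasDerivAt (fun s => T (u s)) (T u') t := T.hasFDerivAt.comp_hasDerivAt t hu
  have hswap : ⟪T (u t), u'⟫ = ⟪T u', u t⟫ := (real_inner_comm _ _).trans (hT _ _).symm
  refine (hTu.inner ℝ hu).congr_deriv ?_
  rw [hswap]
  ring

/-- Completing the square: `0 ≤ ⟪T (v - 2u), v - 2u⟫`. -/
theorem IsPositive.four_mul_inner_sub_le {T : H →L[ℝ] H} (hT : T.IsPositive) (u v : H) :
    4 * (⟪T v, u⟫ - ⟪T u, u⟫) ≤ ⟪T v, v⟫ := by
  have hsq := hT.inner_nonneg_left (v - (2 : ℝ) • u)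
  have hcross : ⟪T u, v⟫ = ⟪T v, u⟫ := (real_inner_comm _ _).trans (hT.isSymmetric _ _).symm
  simp only [map_sub, map_smul, inner_sub_left, inner_sub_right, real_inner_smul_left,
    real_inner_smul_right, hcross] at hsq
  linarith

end ContinuousLinearMap

theorem evolution_energy_estimate_general
    {H : Type*} [NormedAddCommGroup H] [InnerProductSpace ℝ H]
    (B A Ainv : H →L[ℝ] H)
    (hBsym : ∀ x y : H, ⟪B x, y⟫ = ⟪x, B y⟫)
    (hAsym : ∀ x y : H, ⟪A x, y⟫ = ⟪x, A y⟫)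
    (hApos : ∀ x : H, 0 ≤ ⟪A x, x⟫)
    (hright : ∀ x : H, A (Ainv x) = x)
    (U U' : ℝ → H) (F : ℝ → H) (hF : Continuous F)
    (hU : ∀ t : ℝ, HasDerivAt U (U' t) t)
    (heq : ∀ t : ℝ, 0 ≤ t → B (U' t) + A (U t) = F t) :
    ∀ t : ℝ, 0 ≤ t →
      ⟪B (U t), U t⟫ ≤ ⟪B (U 0), U 0⟫
        + (1 / 2) * ∫ s in (0 : ℝ)..t, ⟪Ainv (F s), F s⟫ := by
  intro t ht
  have hA : A.IsPositive := A.isPositive_iff.mpr ⟨hAsym, hApos⟩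
  have hE : ∀ s, HasDerivAt (fun s => ⟪B (U s), U s⟫) (2 * ⟪B (U' s), U s⟫) s :=
    fun s => ContinuousLinearMap.IsSymmetric.hasDerivAt_inner_map_self hBsym (hU s)
  have hrate : ∀ s, 0 ≤ s → 2 * ⟪B (U' s), U s⟫ ≤ 1 / 2 * ⟪Ainv (F s), F s⟫ := by
    intro s hs
    have hB : B (U' s) = A (Ainv (F s)) - A (U s) := by
      rw [hright, ← heq s hs, add_sub_cancel_right]
    have hsq := hA.four_mul_inner_sub_le (U s) (Ainv (F s))
    rw [hright, ← real_inner_comm (F s) (Ainv (F s))] at hsq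
    rw [hB, inner_sub_left, hright]
    linarith
  have hg : Continuous fun s => 1 / 2 * ⟪Ainv (F s), F s⟫ := by fun_prop
  have hgrowth := intervalIntegral.sub_le_integral_of_hasDeriv_right_of_le ht
    (fun s _ => (hE s).continuousAt.continuousWithinAt) (fun s _ => (hE s).hasDerivWithinAt)
    hg.integrableOn_Icc (fun s hs => hrate s hs.1.le)
  rw [intervalIntegral.integral_const_mul] at hgrowth
  linarith

theorem evolution_energy_estimate
    {H : Type*} [NormedAddCommGroup H] [InnerProductSpace ℝ H]
    [FiniteDimensional ℝ H]
    (B A Ainv : H →L[ℝ] H)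
    (hBsym : ∀ x y : H, ⟪B x, y⟫ = ⟪x, B y⟫)
    (hAsym : ∀ x y : H, ⟪A x, y⟫ = ⟪x, A y⟫)
    (hBpos : ∀ x : H, 0 ≤ ⟪B x, x⟫)
    (hApos : ∀ x : H, 0 ≤ ⟪A x, x⟫)
    (hleft : ∀ x : H, Ainv (A x) = x) (hright : ∀ x : H, A (Ainv x) = x)
    (hAinvsym : ∀ x y : H, ⟪Ainv x, y⟫ = ⟪x, Ainv y⟫)
    (hAinvpos : ∀ x : H, 0 ≤ ⟪Ainv x, x⟫)
    (U U' : ℝ → H) (F : ℝ → H) (hF : Continuous F)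
    (hU : ∀ t : ℝ, HasDerivAt U (U' t) t)
    (heq : ∀ t : ℝ, 0 ≤ t → B (U' t) + A (U t) = F t) :
    ∀ t : ℝ, 0 ≤ t →
      ⟪B (U t), U t⟫ ≤ ⟪B (U 0), U 0⟫
        + (1 / 2) * ∫ s in (0 : ℝ)..t, ⟪Ainv (F s), F s⟫ :=
  evolution_energy_estimate_general B A Ainv hBsym hAsym hApos hright U U' F hF hU heq
end

section
/- Suppose a and c are symmetric positive semidefinite bilinear forms, b is symmetric positive definite (with dual norm ‖·‖_{*,b}), g and d are bilinear forms satisfying d(u,q) = -g(q,u), and for τ > 0, θ ≥ 1/2 the pair (uⁿ⁺¹, pⁿ⁺¹) satisfies: a(u_θ, (uⁿ⁺¹-uⁿ)/τ) + g(p_θ, (uⁿ⁺¹-uⁿ)/τ) = 0 and c((pⁿ⁺¹-pⁿ)/τ, p_θ) + d((uⁿ⁺¹-uⁿ)/τ, p_θ) + b(p_θ, p_θ) = ℓ(f, p_θ), where u_θ = θuⁿ⁺¹+(1-θ)uⁿ, p_θ = θpⁿ⁺¹+(1-θ)pⁿ, and ℓ(f,p_θ) ≤ b(p_θ,p_θ)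 + (1/4)‖f‖_{*,b}². Then a(uⁿ⁺¹,uⁿ⁺¹) + c(pⁿ⁺¹,pⁿ⁺¹) ≤ a(uⁿ,uⁿ) + c(pⁿ,pⁿ) + (τ/2)‖f‖_{*,b}². -/
theorem weighted_scheme_stability
    {V Q : Type*} [AddCommGroup V] [Module ℝ V] [AddCommGroup Q] [Module ℝ Q]
    (a : V →ₗ[ℝ] V →ₗ[ℝ] ℝ) (c : Q →ₗ[ℝ] Q →ₗ[ℝ] ℝ)
    (b : Q →ₗ[ℝ] Q →ₗ[ℝ] ℝ)
    (g : Q →ₗ[ℝ] V →ₗ[ℝ] ℝ) (d : V →ₗ[ℝ] Q →ₗ[ℝ] ℝ)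
    (l : Q →ₗ[ℝ] ℝ)
    (hasym : ∀ u v : V, a u v = a v u) (hapos : ∀ v : V, 0 ≤ a v v)
    (hcsym : ∀ p q : Q, c p q = c q p) (hcpos : ∀ q : Q, 0 ≤ c q q)
    (hbsym : ∀ p q : Q, b p q = b q p) (hbpos : ∀ q : Q, 0 ≤ b q q)
    (hdg : ∀ (v : V) (q : Q), d v q = -g q v)
    (τ θ : ℝ) (hτ : 0 < τ) (hθ : 1 / 2 ≤ θ)
    (un un1 : V) (pn pn1 : Q) (normf : ℝ) (hnormf : 0 ≤ normf)
    (uθ : V) (huθ : uθ = θ • un1 + (1 - θ) • un)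
    (pθ : Q) (hpθ : pθ = θ • pn1 + (1 - θ) • pn)
    (heq1 : a uθ ((τ⁻¹ : ℝ) • (un1 - un)) + g pθ ((τ⁻¹ : ℝ) • (un1 - un)) = 0)
    (heq2 : c ((τ⁻¹ : ℝ) • (pn1 - pn)) pθ + d ((τ⁻¹ : ℝ) • (un1 - un)) pθ
              + b pθ pθ = l pθ)
    (hl : l pθ ≤ b pθ pθ + (1 / 4) * normf ^ 2) :
    a un1 un1 + c pn1 pn1 ≤ a un un + c pn pn + (τ / 2) * normf ^ 2 := by
  subst huθ hpθ
  -- combine the two equations; the coupling terms cancel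
  have hkey : a (θ • un1 + (1 - θ) • un) ((τ⁻¹ : ℝ) • (un1 - un))
      + c ((τ⁻¹ : ℝ) • (pn1 - pn)) (θ • pn1 + (1 - θ) • pn)
      ≤ (1 / 4) * normf ^ 2 := by
    have hd := hdg ((τ⁻¹ : ℝ) • (un1 - un)) (θ • pn1 + (1 - θ) • pn)
    linarith [heq1, heq2, hl]
  simp only [map_add, map_smul, map_sub, LinearMap.add_apply, LinearMap.smul_apply,
    LinearMap.sub_apply, smul_eq_mul] at hkey
  have h1 : τ⁻¹ * ((θ * a un1 un1 + (1 - θ) * a un un1 - (θ * a un1 un + (1 - θ) * a un un))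
      + (θ * (c pn1 pn1 - c pn pn1) + (1 - θ) * (c pn1 pn - c pn pn)))
      ≤ 1 / 4 * normf ^ 2 := by nlinarith [hkey]
  have h2 := (inv_mul_le_iff₀ hτ).mp h1
  have ha := hapos (un1 - un)
  have hc := hcpos (pn1 - pn)
  simp only [map_sub, LinearMap.sub_apply] at ha hc
  have hs1 := hasym un1 un
  have hs2 := hcsym pn1 pn
  nlinarith [h2, mul_nonneg (sub_nonneg.mpr hθ) ha, mul_nonneg (sub_nonneg.mpr hθ) hc]
end

section
/- Let A be symmetric positive semidefinite and let S > 0. If (u(t), p(t)) solve the coupled system A u + α G p = 0 and S p' + α D u' + B p = f with B symmetric positive definite invertible, where ⟨G p, v⟩ = -⟨D v, p⟩ for all p, v, then ⟨A u(t), u(t)⟩ + S‖p(t)‖² ≤ ⟨A u(0), u(0)⟩ + S‖p(0)‖² + (1/2)∫₀ᵗ ⟨B⁻¹ f(s), f(s)⟩ ds. -/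
open RealInnerProductSpace

theorem poroelasticity_apriori_estimate
    {V Q : Type*} [NormedAddCommGroup V] [InnerProductSpace ℝ V]
    [FiniteDimensional ℝ V]
    [NormedAddCommGroup Q] [InnerProductSpace ℝ Q] [FiniteDimensional ℝ Q]
    (A : V →L[ℝ] V) (B Binv : Q →L[ℝ] Q)
    (G : Q →L[ℝ] V) (D : V →L[ℝ] Q)
    (hAsym : ∀ x y : V, ⟪A x, y⟫ = ⟪x, A y⟫)
    (hApos : ∀ x : V, 0 ≤ ⟪A x, x⟫)
    (hBsym : ∀ x y : Q, ⟪B x, y⟫ = ⟪x, B y⟫)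
    (hBpos : ∀ x : Q, x ≠ 0 → 0 < ⟪B x, x⟫)
    (hleft : ∀ x : Q, Binv (B x) = x) (hright : ∀ x : Q, B (Binv x) = x)
    (hGD : ∀ (p : Q) (v : V), ⟪G p, v⟫ = -⟪D v, p⟫)
    (α S : ℝ) (hS : 0 < S)
    (u u' : ℝ → V) (p p' : ℝ → Q) (f : ℝ → Q) (hf : Continuous f)
    (hu : ∀ t : ℝ, HasDerivAt u (u' t) t)
    (hp : ∀ t : ℝ, HasDerivAt p (p' t) t)
    (heq1 : ∀ t : ℝ, 0 ≤ t → A (u t) + α • G (p t) = 0)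
    (heq2 : ∀ t : ℝ, 0 ≤ t → S • p' t + α • D (u' t) + B (p t) = f t) :
    ∀ t : ℝ, 0 ≤ t →
      ⟪A (u t), u t⟫ + S * ‖p t‖ ^ 2
        ≤ ⟪A (u 0), u 0⟫ + S * ‖p 0‖ ^ 2
          + (1 / 2) * ∫ s in (0 : ℝ)..t, ⟪Binv (f s), f s⟫ := by
  intro t ht
  have hBpos' : ∀ x : Q, 0 ≤ ⟪B x, x⟫ := by
    intro x
    rcases eq_or_ne x 0 with rfl | hx
    · simp
    · exact (hBpos x hx).le
  have hdp : Differentiable ℝ p := fun x => (hp x).differentiableAt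
  have hpc : Continuous p := hdp.continuous
  set E : ℝ → ℝ := fun s => ⟪A (u s), u s⟫ + S * ⟪p s, p s⟫ with hEdef
  set h : ℝ → ℝ := fun s => 2 * ⟪f s, p s⟫ - 2 * ⟪B (p s), p s⟫ with hhdef
  set g : ℝ → ℝ := fun s => (1 / 2) * ⟪Binv (f s), f s⟫ with hgdef
  -- derivative of E
  have hderiv : ∀ s ∈ Set.uIcc (0 : ℝ) t, HasDerivAt E (h s) s := by
    intro s hs
    have hs0 : 0 ≤ s := by
      rw [Set.uIcc_of_le ht] at hs; exact hs.1
    have hAu : HasDerivAt (fun r => A (u r)) (A (u' s)) s :=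
      A.hasFDerivAt.comp_hasDerivAt s (hu s)
    have h1 : HasDerivAt (fun r => ⟪A (u r), u r⟫) (⟪A (u s), u' s⟫ + ⟪A (u' s), u s⟫) s :=
      hAu.inner ℝ (hu s)
    have h2 : HasDerivAt (fun r => S * ⟪p r, p r⟫) (S * (⟪p s, p' s⟫ + ⟪p' s, p s⟫)) s :=
      ((hp s).inner ℝ (hp s)).const_mul S
    have hE : HasDerivAt E (⟪A (u s), u' s⟫ + ⟪A (u' s), u s⟫ + S * (⟪p s, p' s⟫ + ⟪p' s, p s⟫)) s :=
      h1.add h2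
    convert hE using 1
    -- algebra
    have e1 : A (u s) = -(α • G (p s)) := eq_neg_of_add_eq_zero_left (heq1 s hs0)
    have ha : ⟪A (u s), u' s⟫ = α * ⟪D (u' s), p s⟫ := by
      rw [e1, inner_neg_left, real_inner_smul_left, hGD]; ring
    have hb : ⟪A (u' s), u s⟫ = α * ⟪D (u' s), p s⟫ := by
      rw [hAsym, real_inner_comm]; exact ha
    have e2 : ⟪S • p' s + α • D (u' s) + B (p s), p s⟫ = ⟪f s, p s⟫ := by
      rw [heq2 s hs0]
    rw [inner_add_left, inner_add_left, real_inner_smul_left, real_inner_smul_left] at e2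
    have hcomm : ⟪p s, p' s⟫ = ⟪p' s, p s⟫ := real_inner_comm _ _
    simp only [hhdef, ha, hb]
    linear_combination (-2 : ℝ) * e2 - S * hcomm
  -- continuity / integrability
  have hhc : Continuous h := by
    apply Continuous.sub
    · exact (continuous_const.mul (hf.inner hpc))
    · exact (continuous_const.mul ((B.continuous.comp hpc).inner hpc))
  have hgc : Continuous g :=
    continuous_const.mul ((Binv.continuous.comp hf).inner hf)
  have hint : IntervalIntegrable h MeasureTheory.volume 0 t := hhc.intervalIntegrable 0 t
  have hint2 : IntervalIntegrable g MeasureTheory.volume 0 t := hgc.intervalIntegrable 0 t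
  have key : ∫ s in (0 : ℝ)..t, h s = E t - E 0 :=
    intervalIntegral.integral_eq_sub_of_hasDerivAt hderiv hint
  -- pointwise Young inequality : h s ≤ g s
  have hyoung : ∀ s : ℝ, h s ≤ g s := by
    intro s
    set q : Q := Binv (f s) with hq
    have hfq : f s = B q := (hright (f s)).symm
    have h0 := hBpos' (q - (2 : ℝ) • p s)
    have hexp : ⟪B (q - (2 : ℝ) • p s), q - (2 : ℝ) • p s⟫
        = ⟪B q, q⟫ - 4 * ⟪B q, p s⟫ + 4 * ⟪B (p s), p s⟫ := by
      have hsw : ⟪B (p s), q⟫ = ⟪B q, p s⟫ := by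
        rw [hBsym, real_inner_comm]
      simp only [map_sub, map_smul, inner_sub_left, inner_sub_right,
        real_inner_smul_left, real_inner_smul_right, hsw]
      ring
    rw [hexp] at h0
    have hq2 : ⟪Binv (f s), f s⟫ = ⟪B q, q⟫ := by
      rw [← hq, hfq, hBsym, real_inner_comm]
    have hfp : ⟪f s, p s⟫ = ⟪B q, p s⟫ := by rw [hfq]
    simp only [hhdef, hgdef]
    linarith [h0, hfp, hq2]
  have hmono : ∫ s in (0 : ℝ)..t, h s ≤ ∫ s in (0 : ℝ)..t, g s :=
    intervalIntegral.integral_mono_on ht hint hint2 fun s _ => hyoung s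
  have hgint : ∫ s in (0 : ℝ)..t, g s = (1 / 2) * ∫ s in (0 : ℝ)..t, ⟪Binv (f s), f s⟫ := by
    simp only [hgdef]
    exact intervalIntegral.integral_const_mul _ _
  have hfinal : E t ≤ E 0 + (1 / 2) * ∫ s in (0 : ℝ)..t, ⟪Binv (f s), f s⟫ := by
    rw [← hgint]; linarith
  have hnorm : ∀ s : ℝ, ⟪p s, p s⟫ = ‖p s‖ ^ 2 := fun s => real_inner_self_eq_norm_sq _
  simp only [hEdef, hnorm] at hfinal
  linarith
end
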